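/- arXiv:0710.0624 — 6 statements merged into one kernel-verified Lean document; each statement's English description precedes it below -/
import Mathlib

section
/- Let 0 → X → Y → Z → 0 be a short exact sequence of modules over a ring R. Then Y is pseudo-null if and only if both X and Z are pseudo-null. -/
universe u

/-- An `R`-module `M` is *pseudo-null* if `E^0(N) = E^1(N) = 0` for every submodule `N`
of `M`, where `E^j(N) = Ext_R^j(N, R)`.  Here `E^0(N) = Hom_R(N, R) = 0` is stated
directly, and `E^1(N) = 0` is stated through its standard characterisation: every
short exact sequence `0 → R → E → N → 0` splits. -/
def IsPseudoNull (R : Type u) [Ring R] (M : Type u) [AddCommGroup M] [Module R M] : Prop :=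
  ∀ N : Submodule R M,
    (∀ φ : N →ₗ[R] R, φ = 0) ∧
    (∀ (E : Type u) [AddCommGroup E] [Module R E] (i : R →ₗ[R] E) (π : E →ₗ[R] N),
      Function.Injective i → Function.Surjective π →
      LinearMap.range i = LinearMap.ker π →
      ∃ σ : N →ₗ[R] E, π.comp σ = LinearMap.id)

/-!
`E^0` and `E^1` obey the long exact `Ext(-, R)`-sequence of `0 → A → B → C → 0`: if they
vanish on `A` and `C` they vanish on `B` (pull an extension of `B` by `R` back to `A`, split
it, and divide by the image of the splitting to get an extension of `C`), and if they vanish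
on `B` and `E^0(A) = 0` they vanish on `C`. A submodule `N` of `Y` is an extension of `g(N)`
by `N ∩ ker g ⊆ f(X)`, and a submodule of `Z` is the quotient of its preimage in `Y` by a
submodule of `Y`; this last case is why the definition asks for vanishing on all submodules.
-/

open LinearMap

namespace Function.Exact

section Semiring

variable {R M N P Q : Type*} [Semiring R] [AddCommMonoid M] [Module R M] [AddCommMonoid N]
  [Module R N] [AddCommMonoid P] [Module R P] [AddCommMonoid Q] [Module R Q]
  {f : M →ₗ[R] N} {g : N →ₗ[R] P}

theorem exists_lift_of_comp_eq_zero (hfg : Function.Exact f g) (hf : Function.Injective f)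
    (φ : Q →ₗ[R] N) (hφ : g ∘ₗ φ = 0) : ∃ ψ : Q →ₗ[R] M, f ∘ₗ ψ = φ := by
  have hφf : ∀ q, φ q ∈ range f := fun q => (hfg (φ q)).mp (LinearMap.congr_fun hφ q)
  exact ⟨(LinearEquiv.ofInjective f hf).symm ∘ₗ φ.codRestrict (range f) hφf,
    by ext q; simp [LinearEquiv.ofInjective_symm_apply]⟩

end Semiring

variable {R M N P Q : Type*} [Ring R] [AddCommGroup M] [Module R M] [AddCommGroup N] [Module R N]
  [AddCommGroup P] [Module R P] [AddCommGroup Q] [Module R Q] {f : M →ₗ[R] N} {g : N →ₗ[R] P}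

theorem exists_desc_of_comp_eq_zero (hfg : Function.Exact f g) (hg : Function.Surjective g)
    (φ : N →ₗ[R] Q) (hφ : φ ∘ₗ f = 0) : ∃ ψ : P →ₗ[R] Q, ψ ∘ₗ g = φ :=
  ⟨(range f).liftQ φ (range_le_ker_iff.mpr hφ) ∘ₗ (hfg.linearEquivOfSurjective hg).symm,
    by ext x; simp⟩

theorem subsingleton_linearMap (hfg : Function.Exact f g) (hg : Function.Surjective g)
    [Subsingleton (M →ₗ[R] Q)] [Subsingleton (P →ₗ[R] Q)] : Subsingleton (N →ₗ[R] Q) := by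
  refine subsingleton_of_forall_eq 0 fun φ => ?_
  obtain ⟨ψ, rfl⟩ := hfg.exists_desc_of_comp_eq_zero hg φ (Subsingleton.elim _ _)
  rw [Subsingleton.elim ψ 0, zero_comp]

end Function.Exact

theorem subsingleton_linearMap_of_surjective {R M N P : Type*} [Semiring R] [AddCommMonoid M]
    [Module R M] [AddCommMonoid N] [Module R N] [AddCommMonoid P] [Module R P] {g : M →ₗ[R] N}
    (hg : Function.Surjective g) [Subsingleton (M →ₗ[R] P)] : Subsingleton (N →ₗ[R] P) :=
  ⟨fun _ _ => (cancel_right hg).mp (Subsingleton.elim _ _)⟩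

/-- `Ext^1_R(M, R) = 0`, in the splitting form used in `IsPseudoNull`. -/
def ExtOneVanishes (R : Type u) [Ring R] (M : Type u) [AddCommGroup M] [Module R M] : Prop :=
  ∀ (E : Type u) [AddCommGroup E] [Module R E] (i : R →ₗ[R] E) (π : E →ₗ[R] M),
    Function.Injective i → Function.Surjective π → Function.Exact i π →
    ∃ σ : M →ₗ[R] E, π ∘ₗ σ = .id

namespace ExtOneVanishes

variable {R A B C : Type u} [Ring R] [AddCommGroup A] [Module R A] [AddCommGroup B] [Module R B]
  [AddCommGroup C] [Module R C]

theorem of_equiv (e : A ≃ₗ[R] B) (hA : ExtOneVanishes R A) : ExtOneVanishes R B := by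
  intro E _ _ i π hi hπ hiπ
  obtain ⟨σ, hσ⟩ := hA E i (e.symm ∘ₗ π) hi (e.symm.surjective.comp hπ)
    (LinearEquiv.postcomp_exact_iff_exact.mpr hiπ)
  refine ⟨σ ∘ₗ e.symm, ?_⟩
  ext b
  simpa using congr(e ($hσ (e.symm b)))

/-- Proved by splitting the pullback of the extension `E` of `B` along `h`. -/
theorem exists_lift {E : Type u} [AddCommGroup E] [Module R E] (hA : ExtOneVanishes R A)
    (h : A →ₗ[R] B) {i : R →ₗ[R] E} {π : E →ₗ[R] B} (hi : Function.Injective i)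
    (hπ : Function.Surjective π) (hiπ : Function.Exact i π) : ∃ τ : A →ₗ[R] E, π ∘ₗ τ = h := by
  let P : Submodule R (E × A) := ker (π ∘ₗ fst R E A - h ∘ₗ snd R E A)
  have mem_P : ∀ x : E × A, x ∈ P ↔ π x.1 = h x.2 := fun x => by
    simp [P, sub_eq_zero]
  let i' : R →ₗ[R] P := (i.prod 0).codRestrict P fun r => by
    simp [mem_P, hiπ.apply_apply_eq_zero]
  let π' : P →ₗ[R] A := snd R E A ∘ₗ P.subtype
  have hi' : Function.Injective i' := fun r s hrs => hi congr(($hrs : E × A).1)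
  have hπ' : Function.Surjective π' := fun a => by
    obtain ⟨e, he⟩ := hπ (h a)
    exact ⟨⟨(e, a), (mem_P _).mpr he⟩, rfl⟩
  have hiπ' : Function.Exact i' π' := by
    rintro ⟨⟨e, a⟩, hea⟩
    refine ⟨fun ha => ?_, fun ⟨r, hr⟩ => congr(($hr : E × A).2).symm⟩
    change a = 0 at ha
    obtain ⟨r, hr⟩ := (hiπ e).mp (by simpa [ha] using (mem_P _).mp hea)
    exact ⟨r, Subtype.ext (Prod.ext hr ha.symm)⟩
  obtain ⟨σ, hσ⟩ := hA P i' π' hi' hπ' hiπ'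
  refine ⟨fst R E A ∘ₗ P.subtype ∘ₗ σ, ?_⟩
  ext a
  have hσa : (σ a : E × A).2 = a := congr($hσ a)
  simpa [hσa] using (mem_P _).mp (σ a).2

variable {f : A →ₗ[R] B} {g : B →ₗ[R] C}

theorem of_exact_of_surjective (hfg : Function.Exact f g) (hg : Function.Surjective g)
    [Subsingleton (A →ₗ[R] R)] (hB : ExtOneVanishes R B) : ExtOneVanishes R C := by
  intro E _ _ i π hi hπ hiπ
  obtain ⟨τ, hτ⟩ := hB.exists_lift g hi hπ hiπ
  obtain ⟨ψ, hψ⟩ := hiπ.exists_lift_of_comp_eq_zero hi (τ ∘ₗ f) (by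
    rw [← comp_assoc, hτ, hfg.linearMap_comp_eq_zero])
  have hτf : τ ∘ₗ f = 0 := by rw [← hψ, Subsingleton.elim ψ 0, comp_zero]
  obtain ⟨σ, rfl⟩ := hfg.exists_desc_of_comp_eq_zero hg τ hτf
  exact ⟨σ, (cancel_right hg).mp (by rw [comp_assoc, hτ, id_comp])⟩

theorem of_exact (hfg : Function.Exact f g) (hf : Function.Injective f)
    (hg : Function.Surjective g) (hA : ExtOneVanishes R A) (hC : ExtOneVanishes R C) :
    ExtOneVanishes R B := by
  intro E _ _ i π hi hπ hiπ
  obtain ⟨τ, hτ⟩ := hA.exists_lift f hi hπ hiπ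
  have hπτ : ∀ a, π (τ a) = f a := fun a => congr($hτ a)
  -- `E ⧸ τ(A)` is an extension of `C` by `R`; a retraction of it is one of `E`.
  let S := range τ
  let π' : (E ⧸ S) →ₗ[R] C :=
    S.liftQ (g ∘ₗ π) (range_le_ker_iff.mpr (by rw [comp_assoc, hτ, hfg.linearMap_comp_eq_zero]))
  have hi' : Function.Injective (S.mkQ ∘ₗ i) := by
    refine (injective_iff_map_eq_zero _).mpr fun r hr => hi ?_
    obtain ⟨a, ha⟩ : i r ∈ S := (Submodule.Quotient.mk_eq_zero S).mp hr
    have hfa : f a = 0 := by rw [← hπτ, ha, hiπ.apply_apply_eq_zero]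
    rw [map_zero, ← ha, hf (hfa.trans f.map_zero.symm), map_zero]
  have hπ' : Function.Surjective π' := fun c => by
    obtain ⟨b, rfl⟩ := hg c
    obtain ⟨e, rfl⟩ := hπ b
    exact ⟨S.mkQ e, rfl⟩
  have hiπ' : Function.Exact (S.mkQ ∘ₗ i) π' := by
    refine fun x => Submodule.Quotient.induction_on S x fun e => ⟨fun he => ?_, ?_⟩
    · obtain ⟨a, ha⟩ := (hfg (π e)).mp he
      obtain ⟨r, hr⟩ := (hiπ (e - τ a)).mp (by rw [map_sub, hπτ, ha, sub_self])
      exact ⟨r, by simpa [hr, Submodule.Quotient.eq] using ⟨a, rfl⟩⟩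
    · rintro ⟨r, hr⟩
      rw [← hr]
      exact congr(g $(hiπ.apply_apply_eq_zero r)).trans g.map_zero
  obtain ⟨ρ, hρ⟩ := ((hiπ'.split_tfae hi' hπ').out 0 1).mp (hC _ _ _ hi' hπ' hiπ')
  have hρ' : (ρ ∘ₗ S.mkQ) ∘ₗ i = .id := by rw [comp_assoc, hρ]
  have hsplit := (hiπ.split_tfae hi hπ).out 0 1
  exact hsplit.mpr ⟨_, hρ'⟩

end ExtOneVanishes

section IsPseudoNull

variable {R X Y Z : Type u} [Ring R] [AddCommGroup X] [Module R X] [AddCommGroup Y] [Module R Y]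
  [AddCommGroup Z] [Module R Z]

theorem isPseudoNull_iff : IsPseudoNull R Y ↔
    ∀ N : Submodule R Y, Subsingleton (N →ₗ[R] R) ∧ ExtOneVanishes R N := by
  simp only [IsPseudoNull, ExtOneVanishes, LinearMap.exact_iff, eq_comm (a := ker _),
    subsingleton_iff_forall_eq (0 : _ →ₗ[R] R)]

theorem IsPseudoNull.of_injective (hY : IsPseudoNull R Y) (f : X →ₗ[R] Y)
    (hf : Function.Injective f) : IsPseudoNull R X := by
  refine isPseudoNull_iff.mpr fun N => ?_
  let e := (Submodule.equivMapOfInjective f hf N).symm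
  obtain ⟨_, hext⟩ := isPseudoNull_iff.mp hY (N.map f)
  exact ⟨subsingleton_linearMap_of_surjective e.surjective, hext.of_equiv e⟩

theorem IsPseudoNull.subsingleton_linearMap (hY : IsPseudoNull R Y) :
    Subsingleton (Y →ₗ[R] R) :=
  have := (isPseudoNull_iff.mp hY ⊤).1
  subsingleton_linearMap_of_surjective Submodule.topEquiv.surjective

theorem IsPseudoNull.extOneVanishes (hY : IsPseudoNull R Y) : ExtOneVanishes R Y :=
  (isPseudoNull_iff.mp hY ⊤).2.of_equiv Submodule.topEquiv

theorem IsPseudoNull.of_surjective (hY : IsPseudoNull R Y) (g : Y →ₗ[R] Z)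
    (hg : Function.Surjective g) : IsPseudoNull R Z := by
  refine isPseudoNull_iff.mpr fun N => ?_
  obtain ⟨N, rfl⟩ : ∃ N' : Submodule R Y, N'.map g = N :=
    ⟨_, Submodule.map_comap_eq_of_surjective hg N⟩
  have hN := hY.of_injective N.subtype N.injective_subtype
  let q := g.submoduleMap N
  have hq : Function.Surjective q := g.submoduleMap_surjective N
  have := hN.subsingleton_linearMap
  have := (hN.of_injective (ker q).subtype (ker q).injective_subtype).subsingleton_linearMap
  exact ⟨subsingleton_linearMap_of_surjective hq,
    hN.extOneVanishes.of_exact_of_surjective (exact_subtype_ker_map q) hq⟩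

theorem IsPseudoNull.of_exact {f : X →ₗ[R] Y} {g : Y →ₗ[R] Z} (hfg : Function.Exact f g)
    (hf : Function.Injective f) (hX : IsPseudoNull R X) (hZ : IsPseudoNull R Z) :
    IsPseudoNull R Y := by
  refine isPseudoNull_iff.mpr fun N => ?_
  let q := g.submoduleMap N
  have hq : Function.Surjective q := g.submoduleMap_surjective N
  let K := ker q
  have hKq : Function.Exact K.subtype q := exact_subtype_ker_map q
  obtain ⟨ψ, hψ⟩ := hfg.exists_lift_of_comp_eq_zero hf (N.subtype ∘ₗ K.subtype) (by
    ext k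
    exact congr($(k.2).1))
  have hK := hX.of_injective ψ <| Function.Injective.of_comp (f := f) <| by
    rw [← coe_comp, hψ]
    exact N.injective_subtype.comp K.injective_subtype
  have := hK.subsingleton_linearMap
  obtain ⟨_, hext⟩ := isPseudoNull_iff.mp hZ (N.map g)
  exact ⟨hKq.subsingleton_linearMap hq,
    .of_exact hKq K.injective_subtype hq hK.extOneVanishes hext⟩

end IsPseudoNull

/-- Let `0 → X → Y → Z → 0` be a short exact sequence of modules over a
ring `R`.  Then `Y` is pseudo-null if and only if both `X` and `Z` are pseudo-null. -/
theorem isPseudoNull_middle_iff {R X Y Z : Type u} [Ring R]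
    [AddCommGroup X] [Module R X] [AddCommGroup Y] [Module R Y]
    [AddCommGroup Z] [Module R Z]
    (f : X →ₗ[R] Y) (g : Y →ₗ[R] Z)
    (hf : Function.Injective f) (hg : Function.Surjective g)
    (hfg : LinearMap.range f = LinearMap.ker g) :
    IsPseudoNull R Y ↔ (IsPseudoNull R X ∧ IsPseudoNull R Z) :=
  ⟨fun hY => ⟨hY.of_injective f hf, hY.of_surjective g hg⟩,
    fun ⟨hX, hZ⟩ => .of_exact (LinearMap.exact_iff.mpr hfg.symm) hf hX hZ⟩
end

section
/- Let R be a commutative noetherian unique factorisation domain and I a nonzero ideal of R. Then the reflexive closure (I^{-1})^{-1} of I equals xR for some x ∈ R, and the module xR/I is pseudo-null. -/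
/-!
Write `I = (g₁, …, gₙ)` and `x = gcd gᵢ`. Then `I ⊆ xR`, and if `c / d ∈ I⁻¹` then `d` divides
every `c gᵢ`, hence `c x`; so `I⁻¹ = x⁻¹R` and `(I⁻¹)⁻¹ = xR`.

The colon ideal `J = (I : x)` kills `xR/I` and contains the `gᵢ / x`, whose gcd is `1`, so
`J⁻¹ = R`; over `R` this reads `(∀ b ∈ J, a ∣ b c) → a ∣ c`. A nonzero `a ∈ J` kills every
submodule `N` of `xR/I`, so `Hom(N, R) = 0`. Given `0 → R → E → N → 0`, the element `a • e` lies
in `R`, and `J⁻¹ = R` shows it is divisible by `a`; dividing by `a` gives a retraction `E → R`,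
so the sequence splits.
-/

universe u

open Function

section PseudoNull

variable {R : Type*} [CommRing R] [IsDomain R]

theorem LinearMap.eq_zero_of_smul_eq_zero {N : Type*} [AddCommGroup N] [Module R N]
    (φ : N →ₗ[R] R) {a : R} (ha : a ≠ 0) (h : ∀ n : N, a • n = 0) : φ = 0 := by
  ext n
  have : a * φ n = 0 := by rw [← smul_eq_mul, ← map_smul, h, map_zero]
  exact (mul_eq_zero.mp this).resolve_left ha

variable {E : Type*} [AddCommGroup E] [Module R E]

theorem exists_retraction_of_smul_mem_range (J : Ideal R) (hJ : J ≠ ⊥)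
    (hJinv : ∀ a c : R, (∀ b ∈ J, a ∣ b * c) → a ∣ c) (i : R →ₗ[R] E) (hi : Injective i)
    (hJE : ∀ b ∈ J, ∀ e : E, b • e ∈ LinearMap.range i) :
    ∃ τ : E →ₗ[R] R, τ ∘ₗ i = LinearMap.id := by
  obtain ⟨a, haJ, ha⟩ := Submodule.exists_mem_ne_zero_of_ne_bot hJ
  let f : E →ₗ[R] R := (LinearEquiv.ofInjective i hi).symm.toLinearMap ∘ₗ
    (a • LinearMap.id).codRestrict (LinearMap.range i) (hJE a haJ)
  have hf : ∀ e, i (f e) = a • e := fun e =>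
    congrArg Subtype.val ((LinearEquiv.ofInjective i hi).apply_symm_apply _)
  have hfi : ∀ r, f (i r) = a * r := fun r => hi (by rw [hf, ← smul_eq_mul, map_smul])
  have hf_dvd : ∀ e, f e ∈ R ∙ a := fun e => by
    refine Ideal.mem_span_singleton.mpr (hJinv a (f e) fun b hb => ?_)
    obtain ⟨t, ht⟩ := hJE b hb e
    refine ⟨t, hi ?_⟩
    rw [← smul_eq_mul, map_smul, hf, ← smul_eq_mul, map_smul, ht, smul_comm]
  refine ⟨(LinearEquiv.toSpanNonzeroSingleton R R a ha).symm.toLinearMap ∘ₗ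
    f.codRestrict (R ∙ a) hf_dvd, LinearMap.ext fun r => ?_⟩
  change (LinearEquiv.toSpanNonzeroSingleton R R a ha).symm _ = r
  rw [LinearEquiv.symm_apply_eq]
  ext
  simp [hfi, mul_comm]

theorem exists_section_of_exact {N : Type*} [AddCommGroup N] [Module R N] (J : Ideal R)
    (hJ : J ≠ ⊥) (hJinv : ∀ a c : R, (∀ b ∈ J, a ∣ b * c) → a ∣ c)
    (hJN : J ≤ Module.annihilator R N) (i : R →ₗ[R] E) (π : E →ₗ[R] N) (hi : Injective i)
    (hπ : Surjective π) (hiπ : Exact i π) : ∃ σ : N →ₗ[R] E, π ∘ₗ σ = LinearMap.id := by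
  have hJE : ∀ b ∈ J, ∀ e : E, b • e ∈ LinearMap.range i := fun b hb e => by
    rw [← hiπ.linearMap_ker_eq, LinearMap.mem_ker, map_smul,
      Module.mem_annihilator.mp (hJN hb)]
  obtain ⟨τ, hτ⟩ := exists_retraction_of_smul_mem_range J hJ hJinv i hi hJE
  exact ⟨_, ((hiπ.splitSurjectiveEquiv hi).symm (hiπ.splitInjectiveEquiv hπ ⟨τ, hτ⟩)).2⟩

end PseudoNull

theorem isPseudoNull_of_le_annihilator {R M : Type u} [CommRing R] [IsDomain R]
    [AddCommGroup M] [Module R M] (J : Ideal R) (hJ : J ≠ ⊥)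
    (hJinv : ∀ a c : R, (∀ b ∈ J, a ∣ b * c) → a ∣ c) (hJM : J ≤ Module.annihilator R M) :
    IsPseudoNull R M := by
  intro N
  have hJN : J ≤ Module.annihilator R N :=
    hJM.trans (N.subtype.annihilator_le_of_injective N.injective_subtype)
  obtain ⟨a, haJ, ha⟩ := Submodule.exists_mem_ne_zero_of_ne_bot hJ
  refine ⟨fun φ => φ.eq_zero_of_smul_eq_zero ha (Module.mem_annihilator.mp (hJN haJ)),
    fun E _ _ i π hi hπ hiπ => exists_section_of_exact J hJ hJinv hJN i π hi hπ ?_⟩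
  exact LinearMap.exact_iff.mpr hiπ.symm

theorem Submodule.colon_le_annihilator_quotient_comap_subtype {R M : Type*} [CommRing R]
    [AddCommGroup M] [Module R M] (N P : Submodule R M) :
    N.colon P ≤ Module.annihilator R (P ⧸ N.comap P.subtype) := by
  intro r hr
  refine Module.mem_annihilator.mpr fun m => ?_
  obtain ⟨⟨p, hp⟩, rfl⟩ := Submodule.Quotient.mk_surjective _ m
  rw [← Submodule.Quotient.mk_smul, Submodule.Quotient.mk_eq_zero]
  exact Submodule.mem_colon.mp hr p hp

section GCD

variable {R : Type*} [CommSemiring R] [NormalizedGCDMonoid R] (s : Finset R)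

theorem Ideal.span_le_span_singleton_gcd : Ideal.span (s : Set R) ≤ Ideal.span {s.gcd id} :=
  Ideal.span_le.mpr fun _ ht => Ideal.mem_span_singleton.mpr (Finset.gcd_dvd ht)

theorem Finset.gcd_id_ne_zero_of_span_ne_bot (hs : Ideal.span (s : Set R) ≠ ⊥) :
    s.gcd id ≠ 0 := fun h =>
  hs (Ideal.span_eq_bot.mpr fun t ht => Finset.gcd_eq_zero_iff.mp h t ht)

theorem dvd_of_forall_mem_colon_span_gcd_dvd_mul (hs : s.Nonempty) {a c : R}
    (h : ∀ b ∈ (Ideal.span (s : Set R)).colon (Ideal.span {s.gcd id} : Set R), a ∣ b * c) :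
    a ∣ c := by
  obtain ⟨g, hsg, hg⟩ := s.extract_gcd id hs
  have hg_mem : ∀ t ∈ s, g t ∈ (Ideal.span (s : Set R)).colon (Ideal.span {s.gcd id} : Set R) :=
    fun t ht => by
      rw [Ideal.mem_colon_span_singleton, mul_comm, ← hsg t ht]
      exact Ideal.subset_span ht
  have : a ∣ s.gcd fun t => c * g t := Finset.dvd_gcd fun t ht => by
    rw [mul_comm]; exact h _ (hg_mem t ht)
  simpa [hg] using this.trans (s.gcd_mul_left' g c).dvd

end GCD

section FractionField

variable {R K : Type*} [CommRing R] [Field K] [Algebra R K] [IsFractionRing R K]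

theorem IsFractionRing.algebraMap_div_mem_range_iff {c d : R} (hd : d ≠ 0) :
    algebraMap R K c / algebraMap R K d ∈ Set.range (algebraMap R K) ↔ d ∣ c := by
  have hd' : algebraMap R K d ≠ 0 := (map_ne_zero_iff _ (IsFractionRing.injective R K)).mpr hd
  constructor
  · rintro ⟨t, ht⟩
    refine ⟨t, IsFractionRing.injective R K ?_⟩
    rw [map_mul, ht, mul_div_cancel₀ _ hd']
  · rintro ⟨t, rfl⟩
    exact ⟨t, by rw [map_mul, mul_div_cancel_left₀ _ hd']⟩

variable [IsDomain R] [NormalizedGCDMonoid R] (s : Finset R)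

theorem mul_algebraMap_gcd_mem_range {y : K}
    (hy : ∀ t ∈ s, y * algebraMap R K t ∈ Set.range (algebraMap R K)) :
    y * algebraMap R K (s.gcd id) ∈ Set.range (algebraMap R K) := by
  obtain ⟨c, d, hd, rfl⟩ := IsFractionRing.div_surjective R y
  have hd0 : d ≠ 0 := nonZeroDivisors.ne_zero hd
  simp_rw [div_mul_eq_mul_div, ← map_mul, IsFractionRing.algebraMap_div_mem_range_iff hd0]
    at hy ⊢
  exact (Finset.dvd_gcd hy).trans (s.gcd_mul_left' id c).dvd

theorem setOf_inv_inv_span_eq_range_gcd_mul (hx : s.gcd id ≠ 0) :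
    {q : K | ∀ y : K,
        (∀ a ∈ Ideal.span (s : Set R), y * algebraMap R K a ∈ Set.range (algebraMap R K)) →
        q * y ∈ Set.range (algebraMap R K)}
      = Set.range (fun r : R => algebraMap R K (s.gcd id * r)) := by
  have hx' : algebraMap R K (s.gcd id) ≠ 0 :=
    (map_ne_zero_iff _ (IsFractionRing.injective R K)).mpr hx
  ext q
  constructor
  · intro hq
    obtain ⟨r, hr⟩ := hq (algebraMap R K (s.gcd id))⁻¹ fun a ha => by
      obtain ⟨t, rfl⟩ := Ideal.mem_span_singleton.mp (Ideal.span_le_span_singleton_gcd s ha)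
      exact ⟨t, by rw [map_mul, inv_mul_cancel_left₀ hx']⟩
    refine ⟨r, ?_⟩
    dsimp only
    rw [map_mul, hr, mul_comm q, mul_inv_cancel_left₀ hx']
  · rintro ⟨r, rfl⟩ y hy
    obtain ⟨t, ht⟩ := mul_algebraMap_gcd_mem_range s fun a ha => hy a (Ideal.subset_span ha)
    refine ⟨r * t, ?_⟩
    dsimp only
    rw [map_mul, map_mul, ht]
    ring

end FractionField

/-- Let `R` be a commutative noetherian unique factorisation domain and `I`
a nonzero ideal of `R`.  Then the reflexive closure `(I⁻¹)⁻¹` of `I` (computed inside the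
fraction field `Q` of `R`, with `J⁻¹ = {q ∈ Q : qJ ⊆ R}`) equals `xR` for some `x ∈ R`,
and the module `xR/I` is pseudo-null. -/
theorem reflexive_closure_principal_and_pseudoNull {R : Type u} [CommRing R] [IsDomain R]
    [IsNoetherianRing R] [UniqueFactorizationMonoid R] (I : Ideal R) (hI : I ≠ ⊥) :
    ∃ x : R,
      {q : FractionRing R | ∀ y : FractionRing R,
          (∀ a ∈ I, y * algebraMap R (FractionRing R) a ∈
            Set.range (algebraMap R (FractionRing R))) →
          q * y ∈ Set.range (algebraMap R (FractionRing R))}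
        = Set.range (fun r : R => algebraMap R (FractionRing R) (x * r)) ∧
      I ≤ Ideal.span {x} ∧
      IsPseudoNull R
        (↥(Ideal.span {x} : Submodule R R) ⧸
          Submodule.comap (Ideal.span {x} : Submodule R R).subtype I) := by
  let _ : NormalizedGCDMonoid R := Classical.arbitrary _
  obtain ⟨s, rfl⟩ := IsNoetherian.noetherian I
  have hx : s.gcd id ≠ 0 := s.gcd_id_ne_zero_of_span_ne_bot hI
  have hs : s.Nonempty := Finset.nonempty_iff_ne_empty.mpr fun h => hx (h ▸ Finset.gcd_empty)
  refine ⟨s.gcd id, setOf_inv_inv_span_eq_range_gcd_mul s hx,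
    Ideal.span_le_span_singleton_gcd s, isPseudoNull_of_le_annihilator _ ?_
      (fun _ _ => dvd_of_forall_mem_colon_span_gcd_dvd_mul s hs)
      (Submodule.colon_le_annihilator_quotient_comap_subtype _ _)⟩
  exact ne_bot_of_le_ne_bot hI Ideal.le_colon
end

section
/- With B_1 ⊆ B as above, an element x ∈ B satisfies d(x) = 0 for all B_1-linear derivations d of B if and only if x ∈ B_1. -/
/-!
The Euler operators `y_i ∂/∂y_i`, i.e. the `B₁`-linear maps `y^α ↦ α_i y^α`, are derivations:
`y^α y^β = u y^{α+β}` with exponents added mod `p` and `u` a product of `p`-th powers, hence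
`u ∈ B₁`, while `(α + β)_i ≡ α_i + β_i` in characteristic `p`. If all of them kill
`x = ∑ c_α y^α`, then `α_i c_α = 0` for all `i` and `α`; as `0 < α_i < p` is a unit, `c_α = 0`
for `α ≠ 0`, so `x = c_0 ∈ B₁`.
-/

open Module

namespace Module.Basis

variable {ι A B : Type*} [CommRing A] [CommRing B] [Algebra A B] (b : Basis ι A B)

lemma leibniz_of_basis {D : B →ₗ[A] B}
    (h : ∀ α β, D (b α * b β) = b α * D (b β) + D (b α) * b β) (x y : B) :
    D (x * y) = x * D y + D x * y := by
  have key : (LinearMap.mul A B).compr₂ D =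
      (LinearMap.mul A B).compl₂ D + LinearMap.mul A B ∘ₗ D :=
    LinearMap.ext_basis b b fun α β => by simpa using h α β
  simpa using LinearMap.congr_fun₂ key x y

variable (w : ι → A)

noncomputable def weightOperator : B →ₗ[A] B :=
  b.constr A fun α => w α • b α

@[simp]
lemma weightOperator_basis (α : ι) : b.weightOperator w (b α) = w α • b α :=
  b.constr_basis A _ α

lemma repr_weightOperator (x : B) (α : ι) :
    b.repr (b.weightOperator w x) α = w α * b.repr x α := by
  have key : b.coord α ∘ₗ b.weightOperator w = w α • b.coord α :=
    b.ext fun β => by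
      rcases eq_or_ne β α with rfl | h
      · simp
      · simp [Ne.symm h]
  simpa using LinearMap.congr_fun key x

lemma weightOperator_algebraMap {i₀ : ι} (h1 : b i₀ = 1) (h0 : w i₀ = 0) (c : A) :
    b.weightOperator w (algebraMap A B c) = 0 := by
  rw [Algebra.algebraMap_eq_smul_one, ← h1, map_smul, weightOperator_basis, h0, zero_smul,
    smul_zero]

lemma weightOperator_mul
    (hmul : ∀ α β, ∃ (u : A) (γ : ι), b α * b β = u • b γ ∧ w γ = w α + w β) (x y : B) :
    b.weightOperator w (x * y) = x * b.weightOperator w y + b.weightOperator w x * y := by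
  refine b.leibniz_of_basis (fun α β => ?_) x y
  obtain ⟨u, γ, hαβ, hγ⟩ := hmul α β
  simp only [weightOperator_basis, mul_smul_comm, smul_mul_assoc, hαβ, map_smul, hγ]
  module

noncomputable def eulerDerivation {p t : ℕ} (b : Basis (Fin t → Fin p) A B) (i : Fin t) :
    B →ₗ[A] B :=
  b.weightOperator fun α => ((α i : ℕ) : A)

end Module.Basis

section Monomial

variable {B : Type*} [CommRing B] {p t : ℕ}

def restrictedMonomial (y : Fin t → B) (α : Fin t → Fin p) : B :=
  ∏ j, y j ^ (α j : ℕ)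

@[simp]
lemma restrictedMonomial_zero [NeZero p] (y : Fin t → B) :
    restrictedMonomial y (0 : Fin t → Fin p) = 1 := by
  simp [restrictedMonomial]

lemma restrictedMonomial_mul (y : Fin t → B) (α β : Fin t → Fin p) :
    restrictedMonomial y α * restrictedMonomial y β =
      (∏ j, (y j ^ p) ^ (((α j : ℕ) + β j) / p)) * restrictedMonomial y (α + β) := by
  simp only [restrictedMonomial, ← Finset.prod_mul_distrib, ← pow_mul, ← pow_add, Pi.add_apply,
    Fin.val_add, Nat.div_add_mod]

variable (B₁ : Subring B) (y : Fin t → B)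

lemma exists_basis_eq_restrictedMonomial
    (hbasis : ∀ b : B, ∃! c : (Fin t → Fin p) → B,
      (∀ α, c α ∈ B₁) ∧ b = ∑ α, c α * restrictedMonomial y α) :
    ∃ b : Basis (Fin t → Fin p) B₁ B, ⇑b = restrictedMonomial y := by
  refine ⟨Basis.mk (v := restrictedMonomial y) ?_ ?_, Basis.coe_mk _ _⟩
  · refine Fintype.linearIndependent_iff.2 fun g hg α => ?_
    obtain ⟨c, -, hc⟩ := hbasis 0
    have h0 : (fun α => (g α : B)) = 0 :=
      (hc _ ⟨fun α => (g α).2, hg.symm⟩).trans (hc 0 ⟨fun _ => zero_mem _, by simp⟩).symm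
    exact Subtype.ext (congr_fun h0 α)
  · rintro x -
    obtain ⟨c, ⟨hc, rfl⟩, -⟩ := hbasis x
    exact Submodule.sum_mem _ fun α _ =>
      Submodule.smul_mem _ (⟨c α, hc α⟩ : B₁) (Submodule.subset_span ⟨α, rfl⟩)

end Monomial

namespace Module.Basis

variable {B : Type*} [CommRing B] {p t : ℕ} [CharP B p] {B₁ : Subring B}
  (b : Basis (Fin t → Fin p) B₁ B)

lemma eulerDerivation_mul {y : Fin t → B} (hy : ∀ j, y j ^ p ∈ B₁)
    (hb : ⇑b = restrictedMonomial y) (i : Fin t) (x z : B) :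
    b.eulerDerivation i (x * z) = x * b.eulerDerivation i z + b.eulerDerivation i x * z := by
  refine b.weightOperator_mul _ (fun α β => ?_) x z
  refine ⟨⟨∏ j, (y j ^ p) ^ (((α j : ℕ) + β j) / p), prod_mem fun j _ => pow_mem (hy j) _⟩,
    α + β, ?_, ?_⟩
  · simpa only [hb, Subring.smul_def, smul_eq_mul] using restrictedMonomial_mul y α β
  · simp only [Pi.add_apply, Fin.val_add, ← CharP.cast_eq_mod, Nat.cast_add]

lemma mem_of_forall_eulerDerivation_eq_zero [NeZero p] (hp : p.Prime) (hb0 : b 0 = 1) {x : B}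
    (hx : ∀ i, b.eulerDerivation i x = 0) : x ∈ B₁ := by
  have hcoord : ∀ α, α ≠ 0 → b.repr x α = 0 := by
    intro α hα
    obtain ⟨i, hi⟩ : ∃ i, α i ≠ 0 := Function.ne_iff.mp hα
    have hunit : IsUnit ((α i : ℕ) : B₁) := (CharP.isUnit_natCast_iff hp).2 fun h =>
      hi (Fin.ext (Nat.eq_zero_of_dvd_of_lt h (α i).isLt))
    have h := b.repr_weightOperator (fun α => ((α i : ℕ) : B₁)) x α
    rw [← eulerDerivation, hx i, map_zero, Finsupp.coe_zero, Pi.zero_apply] at h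
    exact hunit.mul_right_eq_zero.1 h.symm
  have hx0 : x = b.repr x 0 • b 0 := by
    conv_lhs => rw [← b.sum_repr x]
    exact Finset.sum_eq_single 0 (fun α _ hα => by rw [hcoord α hα, zero_smul]) (by simp)
  rw [hx0, hb0, Subring.smul_def, smul_eq_mul, mul_one]
  exact (b.repr x 0).2

end Module.Basis

/-- With `B₁ ⊆ B` commutative rings of characteristic `p`, `B^[p] ⊆ B₁`
and `B = ⨁_{α ∈ [p-1]^t} B₁ y^α` free over `B₁` on the monomials in `y₁,…,y_t`, an
element `x ∈ B` satisfies `d x = 0` for all `B₁`-linear derivations `d` of `B` if and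
only if `x ∈ B₁`. -/
theorem killed_by_all_derivations_iff {B : Type*} [CommRing B] (p t : ℕ)
    (hp : p.Prime) [CharP B p] (B₁ : Subring B)
    (hFrob : ∀ b : B, b ^ p ∈ B₁) (y : Fin t → B)
    (hbasis : ∀ b : B, ∃! c : (Fin t → Fin p) → B,
      (∀ α, c α ∈ B₁) ∧
      b = ∑ α : Fin t → Fin p, c α * ∏ i, y i ^ (α i : ℕ)) :
    ∀ x : B,
      (∀ d : B → B,
        ((∀ a b : B, d (a + b) = d a + d b) ∧
         (∀ a b : B, d (a * b) = a * d b + d a * b) ∧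
         (∀ b ∈ B₁, d b = 0)) → d x = 0) ↔ x ∈ B₁ := by
  have : NeZero p := ⟨hp.ne_zero⟩
  intro x
  refine ⟨fun hx => ?_, fun hx d hd => hd.2.2 x hx⟩
  obtain ⟨b, hb⟩ := exists_basis_eq_restrictedMonomial B₁ y hbasis
  have hb0 : b 0 = 1 := by rw [hb, restrictedMonomial_zero]
  exact b.mem_of_forall_eulerDerivation_eq_zero hp hb0 fun i => hx _ ⟨map_add _,
    b.eulerDerivation_mul (fun j => hFrob (y j)) hb i,
    fun c hc => b.weightOperator_algebraMap _ hb0 (by simp) ⟨c, hc⟩⟩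
end

section
/- With B_1 ⊆ B as above, an ideal I of B is stable under all B_1-linear derivations of B if and only if I = (I ∩ B_1)·B. -/
set_option linter.unusedSectionVars false
open MvPolynomial

section DerivAux
variable {B : Type*} [CommRing B] {t p : ℕ} {B₁ : Subring B}


theorem pderiv_prodX_notin (i : Fin t) (s : Finset (Fin t)) (hi : i ∉ s) (β : Fin t → ℕ) :
    pderiv i (∏ j ∈ s, (X j : MvPolynomial (Fin t) B₁) ^ β j) = 0 := by
  induction s using Finset.induction with
  | empty => simp
  | @insert a s' ha ih =>
    rw [Finset.prod_insert ha, Derivation.leibniz,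
      ih (fun hm => hi (Finset.mem_insert_of_mem hm))]
    have hia : i ≠ a := fun he => hi (he ▸ Finset.mem_insert_self a s')
    rw [pderiv_pow, pderiv_X, Pi.single_eq_of_ne (Ne.symm hia)]
    simp

theorem prodX_update (i : Fin t) (β : Fin t → ℕ) (m : ℕ) :
    (∏ j, (X j : MvPolynomial (Fin t) B₁) ^ (Function.update β i m j)) =
      X i ^ m * ∏ j ∈ Finset.univ.erase i, X j ^ β j := by
  rw [← Finset.mul_prod_erase Finset.univ _ (Finset.mem_univ i), Function.update_self]
  congr 1
  exact Finset.prod_congr rfl fun j hj =>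
    by rw [Function.update_of_ne (Finset.ne_of_mem_erase hj)]

theorem pderiv_monomial_step (i : Fin t) (c : B₁) (β : Fin t → ℕ) :
    pderiv i (C c * ∏ j, (X j : MvPolynomial (Fin t) B₁) ^ β j) =
      (β i) • (C c * ∏ j, X j ^ (Function.update β i (β i - 1) j)) := by
  rw [prodX_update]
  rw [← Finset.mul_prod_erase Finset.univ (fun j => (X j : MvPolynomial (Fin t) B₁) ^ β j)
    (Finset.mem_univ i)]
  rw [Derivation.leibniz, pderiv_C, Derivation.leibniz,
    pderiv_prodX_notin i _ (Finset.notMem_erase i _) β, pderiv_pow, pderiv_X,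
    Pi.single_eq_same]
  simp only [smul_eq_mul, nsmul_eq_mul, smul_zero, mul_zero, zero_mul, add_zero, zero_add,
    mul_one]
  ring
theorem iter_pderiv_monomial (i : Fin t) (k : ℕ) (c : B₁) (β : Fin t → ℕ) :
    (fun q => pderiv i q)^[k] (C c * ∏ j, (X j : MvPolynomial (Fin t) B₁) ^ β j) =
      ((β i).descFactorial k) •
        (C c * ∏ j, X j ^ (Function.update β i (β i - k) j)) := by
  induction k generalizing β with
  | zero =>
    simp only [Function.iterate_zero, id_eq, Nat.descFactorial_zero, one_smul, Nat.sub_zero]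
    rw [Function.update_eq_self]
  | succ k ih =>
    rw [Function.iterate_succ_apply', ih, map_nsmul, pderiv_monomial_step]
    rw [Function.update_self, Function.update_idem]
    rw [smul_smul]
    have h1 : (β i).descFactorial k * (β i - k) = (β i).descFactorial (k + 1) := by
      rw [Nat.descFactorial_succ, Nat.mul_comm]
    rw [h1, Nat.sub_sub]



theorem pderiv_mem_J [CharP B p] (a : Fin t → B₁) (i : Fin t) {q : MvPolynomial (Fin t) B₁}
    (hq : q ∈ Ideal.span (Set.range fun j : Fin t =>
      (X j : MvPolynomial (Fin t) B₁) ^ p - C (a j))) :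
    pderiv i q ∈ Ideal.span (Set.range fun j : Fin t =>
      (X j : MvPolynomial (Fin t) B₁) ^ p - C (a j)) := by
  refine Submodule.span_induction ?_ ?_ ?_ ?_ hq
  · rintro x ⟨j, rfl⟩
    rw [map_sub, pderiv_C, pderiv_pow,
      CharP.cast_eq_zero (MvPolynomial (Fin t) B₁) p]
    simp
  · simp
  · intro x y _ _ hx hy
    rw [map_add]; exact add_mem hx hy
  · intro r x hxm hx
    rw [smul_eq_mul, Derivation.leibniz, smul_eq_mul, smul_eq_mul]
    exact add_mem (Ideal.mul_mem_left _ _ hx) (Ideal.mul_mem_right _ _ hxm)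

theorem iterD_exists (T : MvPolynomial (Fin t) B₁ → Prop)
    (hT : ∀ (i : Fin t) q, T q → T (pderiv i q)) (s : Finset (Fin t)) (ν : Fin t → ℕ) :
    ∃ D : MvPolynomial (Fin t) B₁ → MvPolynomial (Fin t) B₁,
      (∀ q, T q → T (D q)) ∧
      (∀ q q', D (q + q') = D q + D q') ∧
      (∀ (n : ℕ) q, D (n • q) = n • D q) ∧
      (∀ (c : B₁) (β : Fin t → ℕ),
        D (C c * ∏ j, X j ^ β j) = (∏ i ∈ s, (β i).descFactorial (ν i)) •
          (C c * ∏ j, X j ^ (if j ∈ s then β j - ν j else β j))) := by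
  induction s using Finset.cons_induction with
  | empty =>
    refine ⟨id, fun q h => h, fun q q' => rfl, fun n q => rfl, fun c β => ?_⟩
    simp
  | cons i s' hi ih =>
    obtain ⟨D, hTD, hAdd, hSmul, hMono⟩ := ih
    have hit_add : ∀ k (q q' : MvPolynomial (Fin t) B₁),
        (fun q => pderiv i q)^[k] (q + q')
          = (fun q => pderiv i q)^[k] q + (fun q => pderiv i q)^[k] q' := by
      intro k
      induction k with
      | zero => intro q q'; rfl
      | succ k ihk =>
        intro q q'
        rw [Function.iterate_succ_apply', Function.iterate_succ_apply',
          Function.iterate_succ_apply', ihk, map_add]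
    have hit_smul : ∀ k (n : ℕ) (q : MvPolynomial (Fin t) B₁),
        (fun q => pderiv i q)^[k] (n • q) = n • (fun q => pderiv i q)^[k] q := by
      intro k
      induction k with
      | zero => intro n q; rfl
      | succ k ihk =>
        intro n q
        rw [Function.iterate_succ_apply', Function.iterate_succ_apply', ihk, map_nsmul]
    have hit_T : ∀ k (q : MvPolynomial (Fin t) B₁), T q → T ((fun q => pderiv i q)^[k] q) := by
      intro k
      induction k with
      | zero => intro q h; exact h
      | succ k ihk =>
        intro q h
        rw [Function.iterate_succ_apply']
        exact hT i _ (ihk q h)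
    refine ⟨fun q => D ((fun q => pderiv i q)^[ν i] q),
      fun q h => hTD _ (hit_T _ _ h),
      fun q q' => by beta_reduce; rw [hit_add, hAdd],
      fun n q => by beta_reduce; rw [hit_smul, hSmul], fun c β => ?_⟩
    beta_reduce
    rw [iter_pderiv_monomial, hSmul, hMono]
    rw [smul_smul]
    congr 1
    · rw [Finset.prod_cons]
      congr 1
      exact Finset.prod_congr rfl fun j hj =>
        by rw [Function.update_of_ne (fun he => hi (by rwa [he] at hj))]
    · congr 1
      refine Finset.prod_congr rfl fun j _ => ?_
      congr 1
      by_cases hji : j = i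
      · subst hji
        rw [Function.update_self, if_neg (fun h => hi h), if_pos (Finset.mem_cons_self j s')]
      · rw [Function.update_of_ne hji]
        by_cases hjs : j ∈ s'
        · rw [if_pos hjs, if_pos (Finset.mem_cons_of_mem hjs)]
        · rw [if_neg hjs, if_neg (fun h => by
            rcases Finset.mem_cons.mp h with h1 | h2
            · exact hji h1
            · exact hjs h2)]

variable [NeZero p]



theorem coe_update (α : Fin t → Fin p) (i : Fin t) (v : Fin p) :
    (fun j => ((Function.update α i v j : Fin p) : ℕ)) =
      Function.update (fun j => (α j : ℕ)) i (v : ℕ) := by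
  funext j
  by_cases h : j = i
  · subst h; simp
  · rw [Function.update_of_ne h, Function.update_of_ne h]

noncomputable def Sred (c : (Fin t → Fin p) → B₁) : MvPolynomial (Fin t) B₁ :=
  ∑ α : Fin t → Fin p, C (c α) * ∏ j, X j ^ (α j : ℕ)

theorem red_mono_mul_X (a : Fin t → B₁) (c : B₁) (α : Fin t → Fin p) (i : Fin t)
    (hSs : ∀ (c₀ : B₁) (γ₀ : Fin t → Fin p),
      Sred (fun γ => if γ = γ₀ then c₀ else 0)
        = C c₀ * ∏ j, (X j : MvPolynomial (Fin t) B₁) ^ ((γ₀ j : ℕ))) :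
    ∃ c' : (Fin t → Fin p) → B₁,
      (C c * ∏ j, (X j : MvPolynomial (Fin t) B₁) ^ (α j : ℕ)) * X i - Sred c'
        ∈ Ideal.span (Set.range fun j : Fin t =>
            (X j : MvPolynomial (Fin t) B₁) ^ p - C (a j)) := by
  have hP := (Finset.mul_prod_erase Finset.univ
    (fun j => (X j : MvPolynomial (Fin t) B₁) ^ (α j : ℕ)) (Finset.mem_univ i)).symm
  have hup : ∀ v : Fin p, (∏ j, (X j : MvPolynomial (Fin t) B₁) ^ ((Function.update α i v j : Fin p) : ℕ))
      = X i ^ (v : ℕ) * ∏ j ∈ Finset.univ.erase i, X j ^ (α j : ℕ) := by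
    intro v
    rw [show (∏ j, (X j : MvPolynomial (Fin t) B₁) ^ ((Function.update α i v j : Fin p) : ℕ))
        = ∏ j, X j ^ (Function.update (fun j => (α j : ℕ)) i (v : ℕ) j) from
      Finset.prod_congr rfl (fun j _ => congrArg (X j ^ ·) (congrFun (coe_update α i v) j)),
      prodX_update]
  by_cases h : (α i : ℕ) + 1 < p
  · refine ⟨fun γ => if γ = Function.update α i ⟨(α i : ℕ) + 1, h⟩ then c else 0, ?_⟩
    rw [hSs, hup, hP]
    have : (C c * (X i ^ (α i : ℕ) * ∏ j ∈ Finset.univ.erase i,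
        (X j : MvPolynomial (Fin t) B₁) ^ (α j : ℕ))) * X i
        = C c * (X i ^ ((α i : ℕ) + 1) * ∏ j ∈ Finset.univ.erase i, X j ^ (α j : ℕ)) := by
      rw [pow_succ]; ring
    rw [this, sub_self]
    exact zero_mem _
  · have hpe : (α i : ℕ) + 1 = p := le_antisymm (α i).isLt (not_lt.mp h)
    refine ⟨fun γ => if γ = Function.update α i ⟨0, Nat.pos_of_ne_zero (NeZero.ne p)⟩
      then c * a i else 0, ?_⟩
    rw [hSs, hup, hP]
    have key : (C c * (X i ^ (α i : ℕ) * ∏ j ∈ Finset.univ.erase i,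
          (X j : MvPolynomial (Fin t) B₁) ^ (α j : ℕ))) * X i
        - C (c * a i) * ((X i : MvPolynomial (Fin t) B₁) ^ ((⟨0, Nat.pos_of_ne_zero (NeZero.ne p)⟩ : Fin p) : ℕ)
            * ∏ j ∈ Finset.univ.erase i, X j ^ (α j : ℕ))
        = (C c * ∏ j ∈ Finset.univ.erase i, X j ^ (α j : ℕ)) * (X i ^ p - C (a i)) := by
      have h2 : (X i : MvPolynomial (Fin t) B₁) ^ (α i : ℕ) * X i = X i ^ p := by
        conv_rhs => rw [← hpe]
        rw [pow_succ]
      rw [show (((⟨0, Nat.pos_of_ne_zero (NeZero.ne p)⟩ : Fin p) : ℕ)) = 0 from rfl, pow_zero,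
        one_mul, map_mul, ← h2]
      ring
    rw [key]
    exact Ideal.mul_mem_left _ _ (Ideal.subset_span ⟨i, rfl⟩)


/-- abbreviation for the reduced polynomial attached to a coefficient family. -/

theorem Sred_single (c₀ : B₁) (γ₀ : Fin t → Fin p) :
    Sred (fun γ => if γ = γ₀ then c₀ else 0) = C c₀ * ∏ j, (X j : MvPolynomial (Fin t) B₁) ^ ((γ₀ j : ℕ)) := by
  rw [Sred, Finset.sum_eq_single_of_mem γ₀ (Finset.mem_univ _)]
  · rw [if_pos rfl]
  · intro γ _ hγ
    rw [if_neg hγ, map_zero, zero_mul]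

theorem Sred_add (c₁ c₂ : (Fin t → Fin p) → B₁) :
    Sred (c₁ + c₂) = Sred c₁ + Sred c₂ := by
  rw [Sred, Sred, Sred, ← Finset.sum_add_distrib]
  exact Finset.sum_congr rfl fun α _ => by rw [Pi.add_apply, map_add, add_mul]

theorem red_sum (a : Fin t → B₁) {ι : Type*} (s : Finset ι) (f : ι → MvPolynomial (Fin t) B₁)
    (h : ∀ x ∈ s, ∃ c : (Fin t → Fin p) → B₁, f x - Sred c ∈ Ideal.span (Set.range fun j : Fin t =>
      (X j : MvPolynomial (Fin t) B₁) ^ p - C (a j))) :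
    ∃ c : (Fin t → Fin p) → B₁, (∑ x ∈ s, f x) - Sred c ∈ Ideal.span (Set.range fun j : Fin t =>
      (X j : MvPolynomial (Fin t) B₁) ^ p - C (a j)) := by
  induction s using Finset.cons_induction with
  | empty =>
    refine ⟨0, ?_⟩
    have : Sred (0 : (Fin t → Fin p) → B₁) = 0 := by
      rw [Sred]
      exact Finset.sum_eq_zero fun α _ => by rw [Pi.zero_apply, map_zero, zero_mul]
    rw [Finset.sum_empty, this, sub_zero]
    exact zero_mem _
  | cons x s' hx ih =>
    obtain ⟨c₂, hc₂⟩ := ih (fun z hz => h z (Finset.mem_cons_of_mem hz))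
    obtain ⟨c₁, hc₁⟩ := h x (Finset.mem_cons_self x s')
    refine ⟨c₁ + c₂, ?_⟩
    rw [Finset.sum_cons, Sred_add]
    have : f x + (∑ z ∈ s', f z) - (Sred c₁ + Sred c₂)
        = (f x - Sred c₁) + ((∑ z ∈ s', f z) - Sred c₂) := by ring
    rw [this]
    exact add_mem hc₁ hc₂

theorem reduction (a : Fin t → B₁) (q : MvPolynomial (Fin t) B₁) :
    ∃ c : (Fin t → Fin p) → B₁, q - Sred c ∈ Ideal.span (Set.range fun j : Fin t =>
      (X j : MvPolynomial (Fin t) B₁) ^ p - C (a j)) := by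
  induction q using MvPolynomial.induction_on with
  | C c₀ =>
    refine ⟨fun γ => if γ = (fun _ => ⟨0, Nat.pos_of_ne_zero (NeZero.ne p)⟩) then c₀ else 0, ?_⟩
    rw [Sred_single]
    have h1 : (∏ j, (X j : MvPolynomial (Fin t) B₁)
        ^ ((((fun _ => ⟨0, Nat.pos_of_ne_zero (NeZero.ne p)⟩) : Fin t → Fin p) j : ℕ))) = 1 := by
      simp
    rw [h1, mul_one, sub_self]
    exact zero_mem _
  | add q1 q2 ih1 ih2 =>
    obtain ⟨c1, h1⟩ := ih1
    obtain ⟨c2, h2⟩ := ih2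
    refine ⟨c1 + c2, ?_⟩
    rw [Sred_add, show q1 + q2 - (Sred c1 + Sred c2) = (q1 - Sred c1) + (q2 - Sred c2) by ring]
    exact add_mem h1 h2
  | mul_X q i ih =>
    obtain ⟨c, hc⟩ := ih
    obtain ⟨c₂, hc₂⟩ := red_sum a Finset.univ
      (fun α : Fin t → Fin p => (C (c α) * ∏ j, (X j : MvPolynomial (Fin t) B₁) ^ (α j : ℕ)) * X i)
      (fun α _ => red_mono_mul_X a (c α) α i Sred_single)
    refine ⟨c₂, ?_⟩
    have hs : Sred c * X i
        = ∑ α : Fin t → Fin p, (C (c α) * ∏ j, (X j : MvPolynomial (Fin t) B₁) ^ (α j : ℕ)) * X i := by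
      rw [Sred, Finset.sum_mul]
    rw [show q * X i - Sred c₂ = (q - Sred c) * X i + (Sred c * X i - Sred c₂) by ring, hs]
    exact add_mem (Ideal.mul_mem_right _ _ hc) hc₂


end DerivAux


/-- With `B₁ ⊆ B` commutative rings of characteristic `p`, `B^[p] ⊆ B₁`
and `B = ⨁_{α ∈ [p-1]^t} B₁ y^α` free over `B₁` on the monomials in `y₁,…,y_t`, an
ideal `I` of `B` is stable under all `B₁`-linear derivations of `B` if and only if it
is controlled by `B₁`, i.e. `I = (I ∩ B₁)·B`. -/
theorem derivation_stable_iff_controlled {B : Type*} [CommRing B] (p t : ℕ)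
    (hp : p.Prime) [CharP B p] (B₁ : Subring B)
    (hFrob : ∀ b : B, b ^ p ∈ B₁) (y : Fin t → B)
    (hbasis : ∀ b : B, ∃! c : (Fin t → Fin p) → B,
      (∀ α, c α ∈ B₁) ∧
      b = ∑ α : Fin t → Fin p, c α * ∏ i, y i ^ (α i : ℕ))
    (I : Ideal B) :
    (∀ d : B → B,
      ((∀ a b : B, d (a + b) = d a + d b) ∧
       (∀ a b : B, d (a * b) = a * d b + d a * b) ∧
       (∀ b ∈ B₁, d b = 0)) → ∀ a ∈ I, d a ∈ I) ↔
    I = Ideal.span ((I : Set B) ∩ (B₁ : Set B)) := by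
  haveI : NeZero p := ⟨hp.ne_zero⟩
  haveI : Fact p.Prime := ⟨hp⟩
  classical
  set a : Fin t → B₁ := fun i => ⟨y i ^ p, hFrob (y i)⟩ with ha
  set J : Ideal (MvPolynomial (Fin t) B₁) :=
    Ideal.span (Set.range fun j : Fin t =>
      (X j : MvPolynomial (Fin t) B₁) ^ p - C (a j)) with hJ
  set φ : MvPolynomial (Fin t) B₁ →ₐ[B₁] B := aeval y with hφ
  have hJ0 : ∀ q ∈ J, φ q = 0 := by
    intro q hq
    refine Submodule.span_induction ?_ ?_ ?_ ?_ hq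
    · rintro x ⟨j, rfl⟩
      rw [map_sub, map_pow, aeval_X, aeval_C]
      show y j ^ p - (a j : B) = 0
      rw [ha, sub_self]
    · exact map_zero φ
    · intro u v _ _ hu hv; rw [map_add, hu, hv, add_zero]
    · intro r u _ hu; rw [smul_eq_mul, map_mul, hu, mul_zero]
  have hφS : ∀ c : (Fin t → Fin p) → B₁,
      φ (Sred c) = ∑ α : Fin t → Fin p, (c α : B) * ∏ i, y i ^ (α i : ℕ) := by
    intro c
    rw [Sred, map_sum]
    refine Finset.sum_congr rfl fun α _ => ?_
    rw [map_mul, map_prod, aeval_C]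
    exact congrArg _ (Finset.prod_congr rfl fun j _ => by rw [map_pow, aeval_X])
  have hker : ∀ q, φ q = 0 → q ∈ J := by
    intro q hq
    obtain ⟨c, hc⟩ := reduction (p := p) a q
    have h0 : φ (Sred c) = 0 := by
      have hh := hJ0 _ hc
      rw [map_sub, hq, zero_sub, neg_eq_zero] at hh
      exact hh
    have h1 : (fun α => ((c α : B))) = fun _ => (0 : B) :=
      (hbasis 0).unique
        ⟨fun α => (c α).2, by rw [← hφS, h0]⟩
        ⟨fun _ => B₁.zero_mem, by simp⟩
    have hc0 : ∀ α, c α = 0 := fun α => Subtype.ext (congrFun h1 α)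
    have hS0 : Sred c = 0 := by
      rw [Sred]
      exact Finset.sum_eq_zero fun α _ => by rw [hc0, map_zero, zero_mul]
    rwa [hS0, sub_zero] at hc
  have hsurj : ∀ b : B, ∃ q, φ q = b := by
    intro b
    obtain ⟨c, ⟨hc1, hc2⟩, -⟩ := hbasis b
    exact ⟨Sred (fun α => ⟨c α, hc1 α⟩), by rw [hφS]; exact hc2.symm⟩
  have hwd : ∀ (i : Fin t) (q q' : MvPolynomial (Fin t) B₁),
      φ q = φ q' → φ (pderiv i q) = φ (pderiv i q') := by
    intro i q q' h
    have h1 : φ (q - q') = 0 := by rw [map_sub, h, sub_self]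
    have h2 := hJ0 _ (pderiv_mem_J a i (hker _ h1))
    rw [map_sub, map_sub] at h2
    exact sub_eq_zero.mp h2
  set d : Fin t → B → B := fun i b => φ (pderiv i (hsurj b).choose) with hdd
  have hdq : ∀ (i : Fin t) (q : MvPolynomial (Fin t) B₁), d i (φ q) = φ (pderiv i q) :=
    fun i q => hwd i _ q ((hsurj (φ q)).choose_spec)
  have hdadd : ∀ (i : Fin t) (u v : B), d i (u + v) = d i u + d i v := by
    intro i u v
    have h1 : φ ((hsurj u).choose + (hsurj v).choose) = u + v := by
      rw [map_add, (hsurj u).choose_spec, (hsurj v).choose_spec]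
    calc d i (u + v) = φ (pderiv i ((hsurj u).choose + (hsurj v).choose)) := by
          rw [← h1, hdq]
      _ = d i u + d i v := by rw [map_add, map_add]
  have hdmul : ∀ (i : Fin t) (u v : B), d i (u * v) = u * d i v + d i u * v := by
    intro i u v
    have h1 : φ ((hsurj u).choose * (hsurj v).choose) = u * v := by
      rw [map_mul, (hsurj u).choose_spec, (hsurj v).choose_spec]
    calc d i (u * v) = φ (pderiv i ((hsurj u).choose * (hsurj v).choose)) := by
          rw [← h1, hdq]
      _ = u * d i v + d i u * v := by
          rw [Derivation.leibniz, map_add, smul_eq_mul, smul_eq_mul, map_mul, map_mul,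
            (hsurj u).choose_spec, (hsurj v).choose_spec]
          ring
  have hdB1 : ∀ (i : Fin t), ∀ b ∈ B₁, d i b = 0 := by
    intro i b hb
    have h1 : φ (C (⟨b, hb⟩ : B₁)) = b := by rw [aeval_C]; rfl
    calc d i b = φ (pderiv i (C (⟨b, hb⟩ : B₁))) := by
          conv_lhs => rw [← h1]
          rw [hdq]
      _ = 0 := by rw [pderiv_C, map_zero]
  constructor
  · intro hstab
    have hdI : ∀ (i : Fin t), ∀ x ∈ I, d i x ∈ I :=
      fun i => hstab (d i) ⟨hdadd i, hdmul i, hdB1 i⟩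
    have hTclosed : ∀ (i : Fin t) (q : MvPolynomial (Fin t) B₁),
        φ q ∈ I → φ (pderiv i q) ∈ I := by
      intro i q h
      rw [← hdq]
      exact hdI i _ h
    -- extraction of coefficients
    have hext : ∀ (x : B), x ∈ I → ∀ (c : (Fin t → Fin p) → B), (∀ α, c α ∈ B₁) →
        x = ∑ α : Fin t → Fin p, c α * ∏ i, y i ^ (α i : ℕ) → ∀ α, c α ∈ I := by
      intro x hx c hc1 hrep
      suffices h : ∀ n (α : Fin t → Fin p), (∑ i, (p - 1 - (α i : ℕ))) = n → c α ∈ I by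
        intro α; exact h _ α rfl
      intro n
      induction n using Nat.strong_induction_on with
      | _ n IH =>
        intro α hα
        obtain ⟨D, hTD, hDadd, hDsmul, hDmono⟩ :=
          iterD_exists (fun q => φ q ∈ I) hTclosed Finset.univ (fun i => (α i : ℕ))
        have hD0 : D 0 = 0 := by
          have := hDsmul 0 0
          simpa using this
        have hDsum : ∀ {ι : Type} (s : Finset ι) (f : ι → MvPolynomial (Fin t) B₁),
            D (∑ b ∈ s, f b) = ∑ b ∈ s, D (f b) := by
          intro ι s f
          induction s using Finset.cons_induction with
          | empty => simpa using hD0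
          | cons z s' hz ih => rw [Finset.sum_cons, Finset.sum_cons, hDadd, ih]
        set Q : MvPolynomial (Fin t) B₁ := Sred (fun β => ⟨c β, hc1 β⟩) with hQdef
        have hQ : φ Q = x := by rw [hQdef, hφS, ← hrep]
        have hDQI : φ (D Q) ∈ I := hTD Q (by rw [hQ]; exact hx)
        have hDQ : φ (D Q) = ∑ β : Fin t → Fin p,
            (∏ i, ((β i : ℕ)).descFactorial ((α i : ℕ))) •
              ((c β) * ∏ j, y j ^ ((β j : ℕ) - (α j : ℕ))) := by
          rw [hQdef, Sred, hDsum, map_sum]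
          refine Finset.sum_congr rfl fun β _ => ?_
          rw [hDmono]
          rw [map_nsmul, map_mul, aeval_C, map_prod]
          congr 1
          refine congrArg _ (Finset.prod_congr rfl fun j _ => ?_)
          rw [map_pow, aeval_X, if_pos (Finset.mem_univ j)]
        rw [← Finset.add_sum_erase _ _ (Finset.mem_univ α)] at hDQ
        have hrest : (∑ β ∈ Finset.univ.erase α,
            (∏ i, ((β i : ℕ)).descFactorial ((α i : ℕ))) •
              ((c β) * ∏ j, y j ^ ((β j : ℕ) - (α j : ℕ)))) ∈ I := by
          refine Submodule.sum_mem _ fun β hβ => ?_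
          by_cases hge : ∀ i, (α i : ℕ) ≤ (β i : ℕ)
          · -- β strictly dominates α, use induction hypothesis
            have hne : β ≠ α := Finset.ne_of_mem_erase hβ
            obtain ⟨j, hj⟩ : ∃ j, (α j : ℕ) < (β j : ℕ) := by
              by_contra hcon
              push_neg at hcon
              exact hne (funext fun i => Fin.ext (le_antisymm (hcon i) (hge i)))
            have hlt : (∑ i, (p - 1 - (β i : ℕ))) < n := by
              rw [← hα]
              refine Finset.sum_lt_sum (fun i _ => Nat.sub_le_sub_left (hge i) _)
                ⟨j, Finset.mem_univ j, ?_⟩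
              have hβj : (β j : ℕ) ≤ p - 1 := Nat.le_pred_of_lt (β j).isLt
              omega
            have hcβ : c β ∈ I := IH _ hlt β rfl
            rw [nsmul_eq_mul]
            exact Ideal.mul_mem_left _ _ (Ideal.mul_mem_right _ _ hcβ)
          · push_neg at hge
            obtain ⟨i, hi⟩ := hge
            have hzero : (∏ i, ((β i : ℕ)).descFactorial ((α i : ℕ))) = 0 :=
              Finset.prod_eq_zero (Finset.mem_univ i)
                (Nat.descFactorial_eq_zero_iff_lt.mpr hi)
            rw [hzero, zero_smul]
            exact zero_mem _
        have hmain : (∏ i, ((α i : ℕ)).descFactorial ((α i : ℕ))) •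
            ((c α) * ∏ j, y j ^ ((α j : ℕ) - (α j : ℕ))) ∈ I := by
          have := Ideal.sub_mem I hDQI hrest
          rwa [hDQ, add_sub_cancel_right] at this
        have hsimp : (∏ i, ((α i : ℕ)).descFactorial ((α i : ℕ))) •
            ((c α) * ∏ j, y j ^ ((α j : ℕ) - (α j : ℕ)))
            = ((∏ i, ((α i : ℕ)).factorial : ℕ) : B) * c α := by
          rw [nsmul_eq_mul]
          congr 1
          · congr 1
            exact Finset.prod_congr rfl fun i _ => Nat.descFactorial_self _
          · rw [show (∏ j, y j ^ ((α j : ℕ) - (α j : ℕ))) = 1 from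
              Finset.prod_eq_one fun j _ => by rw [Nat.sub_self, pow_zero], mul_one]
        rw [hsimp] at hmain
        -- the factorial is a unit in B
        have hcop : ¬ p ∣ (∏ i, ((α i : ℕ)).factorial) := by
          rw [Prime.dvd_finset_prod_iff hp.prime]
          rintro ⟨i, -, hdvd⟩
          have := (Nat.Prime.dvd_factorial hp).mp hdvd
          have := (α i).isLt
          omega
        have hu : IsUnit (((∏ i, ((α i : ℕ)).factorial : ℕ) : B)) := by
          have h1 : IsUnit (((∏ i, ((α i : ℕ)).factorial : ℕ) : ZMod p)) := by
            rw [isUnit_iff_ne_zero, Ne, ZMod.natCast_eq_zero_iff]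
            exact hcop
          have h2 := h1.map (ZMod.castHom (dvd_refl p) B)
          rwa [map_natCast] at h2
        obtain ⟨u, hu⟩ := hu
        have : c α = (↑u⁻¹ : B) * (((∏ i, ((α i : ℕ)).factorial : ℕ) : B) * c α) := by
          rw [← mul_assoc, ← hu, Units.inv_mul, one_mul]
        rw [this]
        exact Ideal.mul_mem_left _ _ hmain
    refine le_antisymm ?_ (Ideal.span_le.mpr fun z hz => hz.1)
    intro x hx
    obtain ⟨c, ⟨hc1, hc2⟩, -⟩ := hbasis x
    have hcI := hext x hx c hc1 hc2
    rw [hc2]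
    exact Submodule.sum_mem _ fun α _ =>
      Ideal.mul_mem_right _ _ (Ideal.subset_span ⟨hcI α, hc1 α⟩)
  · rintro hIeq d ⟨hadd, hmul, hB1⟩ z hz
    have key : ∀ w ∈ Ideal.span ((I : Set B) ∩ (B₁ : Set B)), d w ∈ I := by
      intro w hw
      refine Submodule.span_induction ?_ ?_ ?_ ?_ hw
      · intro x hxm
        rw [hB1 x hxm.2]
        exact zero_mem _
      · rw [hB1 0 B₁.zero_mem]
        exact zero_mem _
      · intro u v _ _ hu hv
        rw [hadd]
        exact add_mem hu hv
      · intro r x hxm hx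
        rw [smul_eq_mul, hmul]
        refine add_mem (Ideal.mul_mem_left _ _ hx) ?_
        have hxI : x ∈ I := by rw [hIeq]; exact hxm
        exact Ideal.mul_mem_left _ _ hxI
    exact key z (by rw [← hIeq]; exact hz)
end

section
/- Let R be a complete filtered ring (with exhaustive separated filtration F_n R whose associated graded ring is gr R) and w ∈ R such that wR is a two-sided ideal of R and the principal symbol gr w is a central regular element of gr R. Then w is a regular normal element of R, i.e. wR = Rw and left/right multiplication by w are injective. -/
/-- Let `R` be a complete filtered ring, with an increasing, exhaustive,
separated ℤ-indexed filtration `F`, and let `w ∈ R` be such that `wR` is a two-sided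
ideal of `R` and the principal symbol `gr w` is a central regular element of `gr R`.
Then `w` is a regular normal element of `R`: `wR = Rw` and left/right multiplication by
`w` are injective.

The filtration data is given elementwise; `w` has degree `n`; centrality of `gr w`
means `w*x - x*w ∈ F (n+m-1)` for `x ∈ F m`, and regularity of `gr w` means that
multiplication by `w` does not lower principal symbols.  Completeness is expressed by
the convergence of all series whose terms have strictly decreasing degrees. -/
theorem regular_normal_of_symbol_central_regular {R : Type*} [Ring R]
    (F : ℤ → AddSubgroup R)
    (hmono : ∀ n : ℤ, F n ≤ F (n + 1))
    (hexh : ∀ x : R, ∃ n : ℤ, x ∈ F n)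
    (hone : (1 : R) ∈ F 0)
    (hmul : ∀ {m n : ℤ} {x y : R}, x ∈ F m → y ∈ F n → x * y ∈ F (m + n))
    (hsep : ∀ x : R, (∀ n : ℤ, x ∈ F n) → x = 0)
    (hcomplete : ∀ (x : ℕ → R) (n : ℤ), (∀ k : ℕ, x k ∈ F (n - k)) →
      ∃ s : R, ∀ m : ℕ, s - (∑ k ∈ Finset.range m, x k) ∈ F (n - m))
    (w : R) (n : ℤ) (hw : w ∈ F n) (hw' : w ∉ F (n - 1))
    (hideal : ∀ r : R, ∃ r' : R, r * w = w * r')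
    (hcentral : ∀ m : ℤ, ∀ x ∈ F m, w * x - x * w ∈ F (n + m - 1))
    (hregular : ∀ m : ℤ, ∀ x ∈ F m, x ∉ F (m - 1) →
      (w * x ∉ F (n + m - 1) ∧ x * w ∉ F (m + n - 1))) :
    (∀ x : R, w * x = 0 → x = 0) ∧ (∀ x : R, x * w = 0 → x = 0) ∧
    (∀ r : R, ∃ s : R, r * w = w * s) ∧ (∀ s : R, ∃ r : R, w * s = r * w) := by
  classical
  -- monotonicity of the filtration
  have Fmono' : ∀ (a : ℤ) (k : ℕ), F a ≤ F (a + k) := by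
    intro a k
    induction k with
    | zero => simp
    | succ k ih =>
        refine le_trans ih ?_
        have := hmono (a + k)
        convert this using 2
        push_cast; ring
  have Fmono : ∀ {a b : ℤ}, a ≤ b → F a ≤ F b := by
    intro a b hab
    obtain ⟨k, rfl⟩ := Int.le.dest hab
    exact Fmono' a k
  -- minimal degree of a nonzero element
  have mindeg : ∀ x : R, x ≠ 0 → ∃ k : ℤ, x ∈ F k ∧ x ∉ F (k - 1) := by
    intro x hx
    obtain ⟨N, hN⟩ := hexh x
    have hlow : ∃ mlow : ℤ, x ∉ F mlow := by
      by_contra h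
      push_neg at h
      exact hx (hsep x h)
    obtain ⟨mlow, hml⟩ := hlow
    have hP : ∃ j : ℕ, x ∉ F (N - j) := by
      refine ⟨(N - mlow).toNat, fun hmem => hml ?_⟩
      exact Fmono (by omega : N - ((N - mlow).toNat : ℤ) ≤ mlow) hmem
    set j₀ := Nat.find hP with hj₀
    have hspec : x ∉ F (N - j₀) := Nat.find_spec hP
    have hj0 : j₀ ≠ 0 := by
      intro h
      apply hspec
      rw [h]; simpa using hN
    have hmem : x ∈ F (N - (j₀ - 1 : ℕ)) := by
      by_contra h
      exact Nat.find_min hP (Nat.pred_lt hj0) h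
    refine ⟨N - j₀ + 1, ?_, ?_⟩
    · have : (((j₀ - 1 : ℕ)) : ℤ) = (j₀ : ℤ) - 1 := by
        have := Nat.one_le_iff_ne_zero.mpr hj0; push_cast [this]; ring
      rw [this] at hmem
      convert hmem using 2; ring
    · convert hspec using 2; ring
  -- key step: the commutator with w is w times something of lower degree
  have key : ∀ (m : ℤ) (x : R), x ∈ F m → ∃ u : R, u ∈ F (m - 1) ∧ w * x - x * w = w * u := by
    intro m x hx
    obtain ⟨x', hx'⟩ := hideal x
    refine ⟨x - x', ?_, ?_⟩
    · by_cases hz : x - x' = 0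
      · rw [hz]; exact (F (m - 1)).zero_mem
      · obtain ⟨k, hk, hk'⟩ := mindeg _ hz
        have hcomm : w * x - x * w ∈ F (n + m - 1) := hcentral m x hx
        have heq : w * (x - x') = w * x - x * w := by rw [mul_sub, hx']
        by_contra hnot
        have hkm : m - 1 < k := by
          by_contra h
          exact hnot (Fmono (by omega) hk)
        have : w * (x - x') ∉ F (n + k - 1) := (hregular k _ hk hk').1
        apply this
        rw [heq]
        exact Fmono (by omega) hcomm
    · rw [mul_sub, hx']
  refine ⟨?_, ?_, fun r => hideal r, ?_⟩
  · intro x hx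
    by_contra hz
    obtain ⟨k, hk, hk'⟩ := mindeg x hz
    exact (hregular k x hk hk').1 (hx ▸ (F (n + k - 1)).zero_mem)
  · intro x hx
    by_contra hz
    obtain ⟨k, hk, hk'⟩ := mindeg x hz
    exact (hregular k x hk hk').2 (hx ▸ (F (k + n - 1)).zero_mem)
  · intro s
    obtain ⟨m₀, hs⟩ := hexh s
    -- build the sequence of correction terms
    let t : ∀ k : ℕ, {u : R // u ∈ F (m₀ - k)} := fun k =>
      Nat.rec ⟨s, by simpa using hs⟩
        (fun k p => ⟨(key _ p.1 p.2).choose, by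
          have h := (key _ p.1 p.2).choose_spec.1
          refine Fmono (by push_cast; omega) h⟩) k
    have ht : ∀ k : ℕ, w * (t k).1 - (t k).1 * w = w * (t (k + 1)).1 := by
      intro k
      exact (key _ (t k).1 (t k).2).choose_spec.2
    -- telescoping identity
    have tel : ∀ m : ℕ, w * s - (∑ k ∈ Finset.range m, (t k).1) * w = w * (t m).1 := by
      intro m
      induction m with
      | zero => simp [t]
      | succ m ih =>
          rw [Finset.sum_range_succ, add_mul]
          rw [← ht m, ← ih]
          abel
    obtain ⟨r, hr⟩ := hcomplete (fun k => (t k).1) m₀ (fun k => (t k).2)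
    refine ⟨r, ?_⟩
    have : ∀ j : ℤ, w * s - r * w ∈ F j := by
      intro j
      set m : ℕ := (m₀ + n - j).toNat with hm
      have h1 : w * s - (∑ k ∈ Finset.range m, (t k).1) * w ∈ F (n + (m₀ - m)) :=
        (tel m) ▸ hmul hw (t m).2
      have h2 : (r - ∑ k ∈ Finset.range m, (t k).1) * w ∈ F ((m₀ - m) + n) :=
        hmul (hr m) hw
      have h3 : w * s - r * w =
          (w * s - (∑ k ∈ Finset.range m, (t k).1) * w) -
            (r - ∑ k ∈ Finset.range m, (t k).1) * w := by rw [sub_mul]; abel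
      rw [h3]
      refine (F j).sub_mem (Fmono ?_ h1) (Fmono ?_ h2) <;> omega
    exact sub_eq_zero.mp (hsep _ this)
end

section
/- In the setting of the previous statement, the injective ring endomorphism σ of R determined by rw = wσ(r) satisfies gr σ(r) = gr r for every nonzero r ∈ R, and σ is surjective (hence an automorphism). -/
/-- Let `R` be a complete filtered ring and `w ∈ R` with `wR` a two-sided
ideal and `gr w` central and regular in `gr R`.  The injective ring endomorphism `σ` of
`R` determined by `r * w = w * σ r` satisfies `gr (σ r) = gr r` for every nonzero
`r ∈ R` (i.e. if `r` has degree `m` then `σ r ∈ F m` and `σ r - r ∈ F (m-1)`), and `σ`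
is surjective, hence an automorphism. -/
theorem sigma_preserves_symbols_and_is_automorphism {R : Type*} [Ring R]
    (F : ℤ → AddSubgroup R)
    (hmono : ∀ n : ℤ, F n ≤ F (n + 1))
    (hexh : ∀ x : R, ∃ n : ℤ, x ∈ F n)
    (hone : (1 : R) ∈ F 0)
    (hmul : ∀ {m n : ℤ} {x y : R}, x ∈ F m → y ∈ F n → x * y ∈ F (m + n))
    (hsep : ∀ x : R, (∀ n : ℤ, x ∈ F n) → x = 0)
    (hcomplete : ∀ (x : ℕ → R) (n : ℤ), (∀ k : ℕ, x k ∈ F (n - k)) →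
      ∃ s : R, ∀ m : ℕ, s - (∑ k ∈ Finset.range m, x k) ∈ F (n - m))
    (w : R) (n : ℤ) (hw : w ∈ F n) (hw' : w ∉ F (n - 1))
    (hideal : ∀ r : R, ∃ r' : R, r * w = w * r')
    (hcentral : ∀ m : ℤ, ∀ x ∈ F m, w * x - x * w ∈ F (n + m - 1))
    (hregular : ∀ m : ℤ, ∀ x ∈ F m, x ∉ F (m - 1) →
      (w * x ∉ F (n + m - 1) ∧ x * w ∉ F (m + n - 1)))
    (σ : R →+* R) (hσ : ∀ r : R, r * w = w * σ r) :
    Function.Injective σ ∧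
    (∀ r : R, r ≠ 0 → ∀ m : ℤ, r ∈ F m → r ∉ F (m - 1) →
      (σ r ∈ F m ∧ σ r - r ∈ F (m - 1))) ∧
    Function.Surjective σ := by
  classical
  -- monotonicity of the filtration
  have mono' : ∀ (a : ℤ) (k : ℕ), F a ≤ F (a + k) := by
    intro a k
    induction k with
    | zero => simp
    | succ k ih =>
      have h : (a + (k + 1 : ℕ) : ℤ) = a + k + 1 := by push_cast; ring
      rw [h]
      exact ih.trans (hmono (a + k))
  have mono : ∀ {a b : ℤ}, a ≤ b → F a ≤ F b := by
    intro a b hab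
    have h := mono' a (b - a).toNat
    have he : a + ((b - a).toNat : ℤ) = b := by
      rw [Int.toNat_of_nonneg (by omega)]; ring
    rwa [he] at h
  -- every nonzero element has a well-defined degree
  have degree : ∀ r : R, r ≠ 0 → ∃ m : ℤ, r ∈ F m ∧ r ∉ F (m - 1) := by
    intro r hr
    obtain ⟨n0, hn0⟩ := hexh r
    have hne : ¬ ∀ nn : ℤ, r ∈ F nn := fun h => hr (hsep r h)
    push_neg at hne
    obtain ⟨n1, hn1⟩ := hne
    have hP : ∃ k : ℕ, r ∈ F (n1 + k) := by
      refine ⟨(n0 - n1).toNat, mono ?_ hn0⟩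
      have := Int.self_le_toNat (n0 - n1)
      omega
    set k := Nat.find hP with hkdef
    have hk : r ∈ F (n1 + k) := Nat.find_spec hP
    have hkpos : k ≠ 0 := by
      intro h
      rw [h] at hk
      simp at hk
      exact hn1 hk
    refine ⟨n1 + k, hk, ?_⟩
    intro hc
    have hmin := Nat.find_min hP (m := k - 1) (by omega)
    apply hmin
    have : (n1 + (k - 1 : ℕ) : ℤ) = n1 + (k : ℤ) - 1 := by
      push_cast [Nat.cast_sub (by omega : 1 ≤ k)]
      ring
    rw [this]
    exact hc
  -- left division by w
  have hdiv : ∀ (k : ℤ) (x : R), w * x ∈ F (n + k) → x ∈ F k := by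
    intro k x hx
    by_contra hxk
    have hx0 : x ≠ 0 := fun h => hxk (h ▸ (F k).zero_mem)
    obtain ⟨m, hm, hm'⟩ := degree x hx0
    have hkm : k ≤ m - 1 := by
      by_contra h
      push_neg at h
      exact hxk (mono (by omega) hm)
    exact (hregular m x hm hm').1 (mono (by omega : n + k ≤ n + m - 1) hx)
  -- σ preserves the filtration
  have hσF : ∀ (k : ℤ) (s : R), s ∈ F k → σ s ∈ F k := by
    intro k s hs
    apply hdiv k
    rw [← hσ]
    exact mono (by omega) (hmul hs hw)
  -- σ s - s drops one degree
  have hσsub : ∀ (k : ℤ) (s : R), s ∈ F k → σ s - s ∈ F (k - 1) := by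
    intro k s hs
    apply hdiv (k - 1)
    have heq : w * (σ s - s) = -(w * s - s * w) := by
      rw [mul_sub, ← hσ]; abel
    rw [heq]
    exact mono (by omega) (neg_mem (hcentral k s hs))
  -- injectivity
  have hinj : Function.Injective σ := by
    rw [injective_iff_map_eq_zero]
    intro r hr
    by_contra hr0
    obtain ⟨m, hm, hm'⟩ := degree r hr0
    have hz : r * w = 0 := by rw [hσ, hr, mul_zero]
    exact (hregular m r hm hm').2 (hz ▸ (F (m + n - 1)).zero_mem)
  -- surjectivity
  have hsurj : Function.Surjective σ := by
    intro s
    obtain ⟨m, hs⟩ := hexh s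
    set t : ℕ → R := fun k => (fun y => y - σ y)^[k] s with htdef
    have htsucc : ∀ k, t (k + 1) = t k - σ (t k) := fun k =>
      Function.iterate_succ_apply' (fun y => y - σ y) k s
    have htF : ∀ k : ℕ, t k ∈ F (m - k) := by
      intro k
      induction k with
      | zero => simpa [htdef] using hs
      | succ k ih =>
        rw [htsucc]
        have h1 : σ (t k) - t k ∈ F (m - (k : ℤ) - 1) := hσsub (m - k) (t k) ih
        have h2 : t k - σ (t k) ∈ F (m - (k : ℤ) - 1) := by
          have := neg_mem h1
          simpa using this
        have : (m - (k : ℤ) - 1) = m - ((k + 1 : ℕ) : ℤ) := by push_cast; ring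
        rwa [this] at h2
    obtain ⟨r, hr⟩ := hcomplete t m htF
    refine ⟨r, ?_⟩
    have key : ∀ K : ℕ, σ r - s ∈ F (m - K) := by
      intro K
      have h1 : σ (r - ∑ k ∈ Finset.range K, t k) ∈ F (m - K) := hσF _ _ (hr K)
      have h2 : σ (∑ k ∈ Finset.range K, t k) = s - t K := by
        rw [map_sum]
        have hc : ∀ k ∈ Finset.range K, σ (t k) = t k - t (k + 1) := by
          intro k _
          rw [htsucc]; abel
        rw [Finset.sum_congr rfl hc, Finset.sum_range_sub']
        simp [htdef]
      have heq : σ r - s = σ (r - ∑ k ∈ Finset.range K, t k) - t K := by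
        rw [map_sub, h2]; abel
      rw [heq]
      exact sub_mem h1 (htF K)
    have hz : σ r - s = 0 := by
      apply hsep
      intro nn
      have hK : (m - ((m - nn).toNat : ℤ)) ≤ nn := by
        have := Int.self_le_toNat (m - nn)
        omega
      exact mono hK (key (m - nn).toNat)
    exact sub_eq_zero.mp hz
  exact ⟨hinj, fun r _ m hm hm' => ⟨hσF m r hm, hσsub m r hm⟩, hsurj⟩
end
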